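/- arXiv:1405.1229 — 4 statements merged into one kernel-verified Lean document; each statement's English description precedes it below -/
import Mathlib

section
/- For every well-formed modular system M in MS(σ,ε) built from primitive modules by projection, sequential composition, union and feedback, the model-theoretic semantics and the operational semantics coincide: M^mt = M^op. -/
universe u

/-- Well-formed modular systems over a universal vocabulary `τ` consisting of all
symbols of type `Symb`, with interpretations in `Val`; `MS Symb Val σ ε` is the type
of well-formed modular systems with input (instance) vocabulary `σ` and output
(expansion) vocabulary `ε`, built from primitive modules by projection, sequential
composition, union and feedback. -/
inductive MS (Symb Val : Type u) : Set Symb → Set Symb → Type u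
  | prim (σ ε : Set Symb) (hdisj : Disjoint σ ε)
      (S : Set (Symb → Val))
      (hS : ∀ B B' : Symb → Val, Set.EqOn B B' (σ ∪ ε) → (B ∈ S ↔ B' ∈ S)) :
      MS Symb Val σ ε
  | proj {σ ε : Set Symb} (ν : Set Symb) (hν : ν ⊆ σ ∪ ε)
      (M : MS Symb Val σ ε) : MS Symb Val (σ ∩ ν) (ε ∩ ν)
  | comp {σ1 ε1 σ2 ε2 : Set Symb}
      (hcomposable : Disjoint ε1 ε2) (hindep : Disjoint σ1 ε2)
      (M1 : MS Symb Val σ1 ε1) (M2 : MS Symb Val σ2 ε2) :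
      MS Symb Val (σ1 ∪ (σ2 \ ε1)) (ε1 ∪ ε2)
  | union {σ1 ε1 σ2 ε2 : Set Symb}
      (h12 : Disjoint σ1 ε2) (h21 : Disjoint σ2 ε1)
      (M1 : MS Symb Val σ1 ε1) (M2 : MS Symb Val σ2 ε2) :
      MS Symb Val (σ1 ∪ σ2) (ε1 ∪ ε2)
  | feedback {σ ε : Set Symb} (R S : Symb) (hR : R ∈ σ) (hS : S ∈ ε)
      (M : MS Symb Val σ ε) : MS Symb Val (σ \ {R}) (ε ∪ {R})

variable {Symb Val : Type u}

/-- Model-theoretic semantics `M^mt`: the set of `(σ ∪ ε)`-structures that are models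
of `M`.  Structures are represented as total functions `Symb → Val`, and a set of
`(σ ∪ ε)`-structures is represented by the set of all total functions whose
restriction to `σ ∪ ε` is one of those structures. -/
def MS.mt : ∀ {σ ε : Set Symb}, MS Symb Val σ ε → Set (Symb → Val)
  | _, _, .prim σ ε _ S _ => {B | ∃ B' ∈ S, Set.EqOn B B' (σ ∪ ε)}
  | _, _, .proj ν _ M => {B | ∃ B' ∈ M.mt, Set.EqOn B' B ν}
  | _, _, .comp _ _ M1 M2 => M1.mt ∩ M2.mt
  | _, _, .union _ _ M1 M2 => M1.mt ∪ M2.mt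
  | _, _, .feedback R S _ _ M => {B | B ∈ M.mt ∧ B R = B S}

/-- The transition relation `(M, B1) ⟶ B2` of the structural operational semantics,
on `τ`-states (total functions `Symb → Val`). -/
def MS.trans : ∀ {σ ε : Set Symb}, MS Symb Val σ ε → (Symb → Val) → (Symb → Val) → Prop
  | _, _, .prim σ ε _ S _, B1, B2 =>
      (∃ B' ∈ S, Set.EqOn B2 B' (σ ∪ ε)) ∧ Set.EqOn B2 B1 εᶜ
  | _, _, @MS.proj _ _ _ ε' ν _ M, B1, B2 =>
      ∃ B1' B2' : Symb → Val, Set.EqOn B1' B1 ν ∧ Set.EqOn B2' B2 ν ∧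
        M.trans B1' B2' ∧ Set.EqOn B2 B1 (ε' ∩ ν)ᶜ
  | _, _, .comp _ _ M1 M2, B1, B2 => ∃ B', M1.trans B1 B' ∧ M2.trans B' B2
  | _, _, .union _ _ M1 M2, B1, B2 => M1.trans B1 B2 ∨ M2.trans B1 B2
  | _, _, .feedback R S _ _ M, B1, B2 => M.trans B1 B2 ∧ B1 R = B2 S

/-- Operational semantics `M^op`: the set of `(σ ∪ ε)`-structures `B` for which there
are `τ`-states `B1`, `B2` with `(M, B1) ⟶ B2`, `B|_σ = B1|_σ` and `B|_ε = B2|_ε`. -/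
def MS.op {σ ε : Set Symb} (M : MS Symb Val σ ε) : Set (Symb → Val) :=
  {B | ∃ B1 B2 : Symb → Val, M.trans B1 B2 ∧ Set.EqOn B B1 σ ∧ Set.EqOn B B2 ε}

theorem MS.disjoint_vocab : ∀ {σ ε : Set Symb} (M : MS Symb Val σ ε), Disjoint σ ε := by
  intro σ ε M
  induction M with
  | prim _ _ hdisj _ _ => exact hdisj
  | proj ν hν M ih =>
      exact Disjoint.mono Set.inter_subset_left Set.inter_subset_left ih
  | comp hc hi M1 M2 ih1 ih2 =>
      rw [Set.disjoint_left] at *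
      rintro x (hx | ⟨hx2, hxn1⟩) (h1 | h2)
      · exact ih1 hx h1
      · exact hi hx h2
      · exact hxn1 h1
      · exact ih2 hx2 h2
  | union h12 h21 M1 M2 ih1 ih2 =>
      rw [Set.disjoint_left] at *
      rintro x (hx1 | hx2) (h1 | h2)
      · exact ih1 hx1 h1
      · exact h12 hx1 h2
      · exact h21 hx2 h1
      · exact ih2 hx2 h2
  | feedback R S hR hS M ih =>
      rw [Set.disjoint_left] at *
      rintro x ⟨hx, hxR⟩ (h | h)
      · exact ih hx h
      · exact hxR h

theorem MS.mt_invariant : ∀ {σ ε : Set Symb} (M : MS Symb Val σ ε)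
    {B B' : Symb → Val}, Set.EqOn B B' (σ ∪ ε) → B ∈ M.mt → B' ∈ M.mt := by
  intro σ ε M
  induction M with
  | prim σ ε hdisj S hS =>
      rintro B B' h ⟨B'', hB'', heq⟩
      exact ⟨B'', hB'', fun x hx => (h hx).symm.trans (heq hx)⟩
  | proj ν hν M ih =>
      rintro B B' h ⟨B0, hB0, heq⟩
      refine ⟨B0, hB0, fun x hx => (heq hx).trans (h ?_)⟩
      rcases hν hx with hs | he
      · exact Or.inl ⟨hs, hx⟩
      · exact Or.inr ⟨he, hx⟩
  | @comp σ1 ε1 σ2 ε2 hc hi M1 M2 ih1 ih2 =>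
      rintro B B' h ⟨h1, h2⟩
      constructor
      · refine ih1 (fun x hx => h ?_) h1
        rcases hx with hs | he
        · exact Or.inl (Or.inl hs)
        · exact Or.inr (Or.inl he)
      · refine ih2 (fun x hx => h ?_) h2
        rcases hx with hs | he
        · by_cases hx1 : x ∈ ε1
          · exact Or.inr (Or.inl hx1)
          · exact Or.inl (Or.inr ⟨hs, hx1⟩)
        · exact Or.inr (Or.inr he)
  | union h12 h21 M1 M2 ih1 ih2 =>
      rintro B B' h hmem
      rcases hmem with h1 | h2
      · refine Or.inl (ih1 (fun x hx => h ?_) h1)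
        rcases hx with hs | he
        · exact Or.inl (Or.inl hs)
        · exact Or.inr (Or.inl he)
      · refine Or.inr (ih2 (fun x hx => h ?_) h2)
        rcases hx with hs | he
        · exact Or.inl (Or.inr hs)
        · exact Or.inr (Or.inr he)
  | @feedback σ' ε' R S hR hS M ih =>
      rintro B B' h ⟨hmem, hRS⟩
      have hsub : (σ' ∪ ε') ⊆ (σ' \ {R}) ∪ (ε' ∪ {R}) := by
        rintro x (hs | he)
        · by_cases hxR : x ∈ ({R} : Set Symb)
          · exact Or.inr (Or.inr hxR)
          · exact Or.inl ⟨hs, hxR⟩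
        · exact Or.inr (Or.inl he)
      refine ⟨ih (fun x hx => h (hsub hx)) hmem, ?_⟩
      have hRmem : R ∈ (σ' \ {R}) ∪ (ε' ∪ {R}) := Or.inr (Or.inr rfl)
      have hSmem : S ∈ (σ' \ {R}) ∪ (ε' ∪ {R}) := Or.inr (Or.inl hS)
      rw [← h hRmem, ← h hSmem]
      exact hRS

theorem MS.trans_frame : ∀ {σ ε : Set Symb} (M : MS Symb Val σ ε)
    {B1 B2 : Symb → Val}, M.trans B1 B2 → Set.EqOn B2 B1 εᶜ := by
  intro σ ε M
  induction M with
  | prim _ _ _ _ _ => rintro B1 B2 ⟨_, h⟩; exact h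
  | proj ν hν M ih => rintro B1 B2 ⟨B1', B2', _, _, _, h⟩; exact h
  | comp hc hi M1 M2 ih1 ih2 =>
      rintro B1 B2 ⟨B', h1, h2⟩
      intro x hx
      simp only [Set.mem_compl_iff, Set.mem_union, not_or] at hx
      exact (ih2 h2 hx.2).trans (ih1 h1 hx.1)
  | union h12 h21 M1 M2 ih1 ih2 =>
      rintro B1 B2 h
      intro x hx
      simp only [Set.mem_compl_iff, Set.mem_union, not_or] at hx
      rcases h with h | h
      · exact ih1 h hx.1
      · exact ih2 h hx.2
  | feedback R S hR hS M ih =>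
      rintro B1 B2 ⟨h, _⟩
      intro x hx
      simp only [Set.mem_compl_iff, Set.mem_union, not_or] at hx
      exact ih h hx.1

theorem MS.trans_mem_mt : ∀ {σ ε : Set Symb} (M : MS Symb Val σ ε)
    {B1 B2 : Symb → Val}, M.trans B1 B2 → B2 ∈ M.mt := by
  intro σ ε M
  induction M with
  | prim σ ε hdisj S hS => rintro B1 B2 ⟨h, _⟩; exact h
  | proj ν hν M ih =>
      rintro B1 B2 ⟨B1', B2', h1, h2, ht, hf⟩
      exact ⟨B2', ih ht, h2⟩
  | @comp σ1 ε1 σ2 ε2 hc hi M1 M2 ih1 ih2 =>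
      rintro B1 B2 ⟨B', h1, h2⟩
      refine ⟨M1.mt_invariant (fun x hx => (M2.trans_frame h2 ?_).symm) (ih1 h1), ih2 h2⟩
      rcases hx with hs | he
      · exact Set.disjoint_left.mp hi hs
      · exact Set.disjoint_left.mp hc he
  | union h12 h21 M1 M2 ih1 ih2 =>
      rintro B1 B2 h
      rcases h with h | h
      · exact Or.inl (ih1 h)
      · exact Or.inr (ih2 h)
  | feedback R S hR hS M ih =>
      rintro B1 B2 ⟨ht, hRS⟩
      refine ⟨ih ht, ?_⟩
      have hRne : B2 R = B1 R :=
        M.trans_frame ht (Set.disjoint_left.mp M.disjoint_vocab hR)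
      rw [hRne, hRS]

theorem MS.mt_trans_self : ∀ {σ ε : Set Symb} (M : MS Symb Val σ ε)
    {B : Symb → Val}, B ∈ M.mt → M.trans B B := by
  intro σ ε M
  induction M with
  | prim _ _ _ _ _ => intro B h; exact ⟨h, fun x _ => rfl⟩
  | proj ν hν M ih =>
      rintro B ⟨B0, h0, heq⟩
      exact ⟨B0, B0, heq, heq, ih h0, fun x _ => rfl⟩
  | comp hc hi M1 M2 ih1 ih2 =>
      rintro B ⟨h1, h2⟩
      exact ⟨B, ih1 h1, ih2 h2⟩
  | union h12 h21 M1 M2 ih1 ih2 =>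
      rintro B h
      rcases h with h | h
      · exact Or.inl (ih1 h)
      · exact Or.inr (ih2 h)
  | feedback R S hR hS M ih =>
      rintro B ⟨h, hRS⟩
      exact ⟨ih h, hRS⟩

/-- For every well-formed modular system `M ∈ MS(σ, ε)` built from
primitive modules by projection, sequential composition, union and feedback, the
model-theoretic semantics and the operational semantics coincide: `M^mt = M^op`. -/
theorem mt_eq_op {σ ε : Set Symb} (M : MS Symb Val σ ε) : M.mt = M.op := by
  ext B
  constructor
  · intro h
    exact ⟨B, B, M.mt_trans_self h, fun _ _ => rfl, fun _ _ => rfl⟩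
  · rintro ⟨B1, B2, ht, hs, he⟩
    refine M.mt_invariant (B := B2) (B' := B) ?_ (M.trans_mem_mt ht)
    intro x hx
    rcases hx with hxs | hxe
    · have hfr : B2 x = B1 x :=
        M.trans_frame ht (Set.disjoint_left.mp M.disjoint_vocab hxs)
      rw [hfr]
      exact (hs hxs).symm
    · exact (he hxe).symm
end

section
/- Every result of applying a modular system is a fixpoint of it: for every well-formed modular system M in MS(σ,ε) built from primitive modules by projection, sequential composition, union and feedback, and all τ-states B1, B2, if (M,B1) → B2 is derivable then (M,B2) → B2 is derivable. -/
universe u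

variable {Symb Val : Type u}

lemma MS.disjoint : ∀ {σ ε : Set Symb}, MS Symb Val σ ε → Disjoint σ ε := by
  intro σ ε M
  induction M with
  | prim σ ε hdisj S hS => exact hdisj
  | proj ν hν M ih =>
      exact ih.mono Set.inter_subset_left Set.inter_subset_left
  | comp hc hi M1 M2 ih1 ih2 =>
      rw [Set.disjoint_union_left, Set.disjoint_union_right, Set.disjoint_union_right]
      exact ⟨⟨ih1, hi⟩, Set.disjoint_sdiff_left, ih2.mono_left Set.diff_subset⟩
  | union h12 h21 M1 M2 ih1 ih2 =>
      rw [Set.disjoint_union_left, Set.disjoint_union_right, Set.disjoint_union_right]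
      exact ⟨⟨ih1, h12⟩, h21, ih2⟩
  | feedback R S hR hS M ih =>
      rw [Set.disjoint_union_right]
      exact ⟨ih.mono_left Set.diff_subset, Set.disjoint_sdiff_left⟩

lemma MS.trans_eqOn : ∀ {σ ε : Set Symb} (M : MS Symb Val σ ε) {A B : Symb → Val},
    M.trans A B → Set.EqOn B A εᶜ := by
  intro σ ε M
  induction M with
  | prim σ ε hdisj S hS => exact fun h => h.2
  | proj ν hν M ih =>
      rintro A B ⟨B1', B2', _, _, _, hlast⟩
      exact hlast
  | comp hc hi M1 M2 ih1 ih2 =>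
      rintro A B ⟨B', h1, h2⟩ s hs
      simp only [Set.mem_compl_iff, Set.mem_union, not_or] at hs
      exact (ih2 h2 hs.2).trans (ih1 h1 hs.1)
  | union h12 h21 M1 M2 ih1 ih2 =>
      rintro A B (h | h) s hs <;>
        simp only [Set.mem_compl_iff, Set.mem_union, not_or] at hs
      · exact ih1 h hs.1
      · exact ih2 h hs.2
  | feedback R S hR hS M ih =>
      rintro A B ⟨ht, _⟩ s hs
      simp only [Set.mem_compl_iff, Set.mem_union, not_or] at hs
      exact ih ht hs.1

lemma MS.key : ∀ {σ ε : Set Symb} (M : MS Symb Val σ ε),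
    (∀ A B : Symb → Val, M.trans A B → M.trans B B) ∧
    (∀ A C : Symb → Val, M.trans A A → Set.EqOn C A (σ ∪ ε) → M.trans C C) := by
  intro σ ε M
  induction M with
  | prim σ ε hdisj S hS =>
      constructor
      · rintro A B ⟨h1, _⟩
        exact ⟨h1, fun s _ => rfl⟩
      · rintro A C ⟨⟨B'', hB'', hEq⟩, _⟩ hC
        exact ⟨⟨B'', hB'', fun s hs => (hC hs).trans (hEq hs)⟩, fun s _ => rfl⟩
  | proj ν hν M ih =>
      constructor
      · rintro A B ⟨B1', B2', h1, h2, ht, hlast⟩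
        exact ⟨B2', B2', h2, h2, ih.1 _ _ ht, fun s _ => rfl⟩
      · rintro A C ⟨B1', B2', h1, h2, ht, _⟩ hC
        classical
        set C1 : Symb → Val := fun s => if s ∈ ν then C s else B2' s with hC1def
        have ht2 := ih.1 _ _ ht
        have hfix := ih.2 B2' C1 ht2 (by
          intro s hs
          by_cases hsnu : s ∈ ν
          · have hCs : C s = A s := by
              apply hC
              rcases hs with hs | hs
              · exact Or.inl ⟨hs, hsnu⟩
              · exact Or.inr ⟨hs, hsnu⟩
            simp only [hC1def, if_pos hsnu]
            exact hCs.trans (h2 hsnu).symm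
          · simp only [hC1def, if_neg hsnu])
        exact ⟨C1, C1, fun s hs => if_pos hs, fun s hs => if_pos hs, hfix,
          fun s _ => rfl⟩
  | comp hc hi M1 M2 ih1 ih2 =>
      rename_i σ1 ε1 σ2 ε2
      constructor
      · rintro A B ⟨B', h1, h2⟩
        have hBB' : Set.EqOn B B' _ᶜ := MS.trans_eqOn M2 h2
        have h2' := ih2.1 _ _ h2
        have h1' := ih1.1 _ _ h1
        have h1'' : M1.trans B B := by
          apply ih1.2 B' B h1'
          intro s hs
          apply hBB'
          rcases hs with hs | hs
          · exact Set.disjoint_left.mp hi hs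
          · exact Set.disjoint_left.mp hc hs
        exact ⟨B, h1'', h2'⟩
      · rintro A C ⟨B', h1, h2⟩ hC
        have hB'A : B' = A := by
          funext s
          by_cases hs : s ∈ ε2
          · exact MS.trans_eqOn M1 h1 (Set.disjoint_right.mp hc hs)
          · exact (MS.trans_eqOn M2 h2 hs).symm
        rw [hB'A] at h1 h2
        have c1 : M1.trans C C := by
          apply ih1.2 A C h1
          intro s hs
          apply hC
          rcases hs with hs | hs
          · exact Or.inl (Or.inl hs)
          · exact Or.inr (Or.inl hs)
        have c2 : M2.trans C C := by
          apply ih2.2 A C h2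
          intro s hs
          apply hC
          rcases hs with hs | hs
          · by_cases hs1 : s ∈ ε1
            · exact Or.inr (Or.inl hs1)
            · exact Or.inl (Or.inr ⟨hs, hs1⟩)
          · exact Or.inr (Or.inr hs)
        exact ⟨C, c1, c2⟩
  | union h12 h21 M1 M2 ih1 ih2 =>
      constructor
      · rintro A B (h | h)
        · exact Or.inl (ih1.1 _ _ h)
        · exact Or.inr (ih2.1 _ _ h)
      · rintro A C (h | h) hC
        · refine Or.inl (ih1.2 A C h fun s hs => hC ?_)
          rcases hs with hs | hs
          · exact Or.inl (Or.inl hs)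
          · exact Or.inr (Or.inl hs)
        · refine Or.inr (ih2.2 A C h fun s hs => hC ?_)
          rcases hs with hs | hs
          · exact Or.inl (Or.inr hs)
          · exact Or.inr (Or.inr hs)
  | feedback R S hR hS M ih =>
      constructor
      · rintro A B ⟨ht, hRS⟩
        refine ⟨ih.1 _ _ ht, ?_⟩
        have hRnot : R ∉ _ := Set.disjoint_left.mp (MS.disjoint M) hR
        exact (MS.trans_eqOn M ht hRnot).trans hRS
      · rintro A C ⟨ht, hRS⟩ hC
        rename_i σ' ε'
        have hsub : Set.EqOn C A (σ' ∪ ε') := by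
          intro s hs
          apply hC
          rcases hs with hs | hs
          · by_cases hsR : s = R
            · exact Or.inr (Or.inr hsR)
            · exact Or.inl ⟨hs, hsR⟩
          · exact Or.inr (Or.inl hs)
        refine ⟨ih.2 A C ht hsub, ?_⟩
        have hCR : C R = A R := hC (Or.inr (Or.inr rfl))
        have hCS : C S = A S := hC (Or.inr (Or.inl hS))
        rw [hCR, hCS, hRS]

/-- Every result of applying a modular system is a fixpoint of it:
for every well-formed modular system `M ∈ MS(σ, ε)` and all `τ`-states `B1`, `B2`,
if `(M, B1) ⟶ B2` is derivable then `(M, B2) ⟶ B2` is derivable. -/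
theorem trans_fixpoint {σ ε : Set Symb} (M : MS Symb Val σ ε)
    (B1 B2 : Symb → Val) (h : M.trans B1 B2) : M.trans B2 B2 := by
  exact (MS.key M).1 B1 B2 h
end

section
/- Inertia of transitions: for every well-formed modular system M in MS(σ,ε) built from primitive modules by projection, sequential composition, union and feedback, and all τ-states B1, B2, if (M,B1) → B2 is derivable then B2 agrees with B1 on every symbol of τ∖ε; in particular, the interpretation of every input symbol in σ is transferred unchanged from B1 to B2. -/
universe u

variable {Symb Val : Type u}

/-- Inertia of transitions: for every well-formed modular system
`M ∈ MS(σ, ε)` and all `τ`-states `B1`, `B2`, if `(M, B1) ⟶ B2` is derivable then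
`B2` agrees with `B1` on every symbol of `τ ∖ ε`; in particular, the interpretation
of every input symbol in `σ` is transferred unchanged from `B1` to `B2`. -/
theorem trans_inertia {σ ε : Set Symb} (M : MS Symb Val σ ε)
    (B1 B2 : Symb → Val) (h : M.trans B1 B2) :
    Set.EqOn B2 B1 εᶜ ∧ ∀ s ∈ σ, B2 s = B1 s := by
  induction M generalizing B1 B2 with
  | prim σ ε hdisj S hS =>
    refine ⟨h.2, fun s hs => h.2 (hdisj.subset_compl_right hs)⟩
  | proj ν hν M ih =>
    obtain ⟨B1', B2', h1, h2, htr, heq⟩ := h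
    refine ⟨heq, fun s hs => ?_⟩
    rw [← h2 hs.2, (ih B1' B2' htr).2 s hs.1, h1 hs.2]
  | comp hc hi M1 M2 ih1 ih2 =>
    obtain ⟨B', h1, h2⟩ := h
    obtain ⟨e1, s1⟩ := ih1 _ _ h1
    obtain ⟨e2, s2⟩ := ih2 _ _ h2
    constructor
    · intro x hx
      simp only [Set.mem_compl_iff, Set.mem_union, not_or] at hx
      rw [e2 hx.2, e1 hx.1]
    · rintro s (hs | hs)
      · rw [e2 (hi.subset_compl_right hs), s1 s hs]
      · rw [s2 s hs.1, e1 hs.2]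
  | union h12 h21 M1 M2 ih1 ih2 =>
    rcases h with h | h
    · obtain ⟨e1, s1⟩ := ih1 _ _ h
      refine ⟨fun x hx => e1 fun hx' => hx (Or.inl hx'), fun s hs => ?_⟩
      rcases hs with hs | hs
      · exact s1 s hs
      · exact e1 (h21.subset_compl_right hs)
    · obtain ⟨e2, s2⟩ := ih2 _ _ h
      refine ⟨fun x hx => e2 fun hx' => hx (Or.inr hx'), fun s hs => ?_⟩
      rcases hs with hs | hs
      · exact e2 (h12.subset_compl_right hs)
      · exact s2 s hs
  | feedback R S hR hS M ih =>
    obtain ⟨e, s⟩ := ih _ _ h.1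
    exact ⟨fun x hx => e fun hx' => hx (Or.inl hx'), fun x hx => s x hx.1⟩
end

section
/- Composition step of the equivalence of semantics: let M1 ∈ MS(σ1,ε1) and M2 ∈ MS(σ2,ε2) be well-formed modular systems with ε1∩ε2 = ∅ and σ1∩ε2 = ∅, such that M1^mt = M1^op and M2^mt = M2^op. Then the sequential composition M1 ▷ M2 ∈ MS(σ1∪(σ2∖ε1), ε1∪ε2) satisfies (M1 ▷ M2)^mt = (M1 ▷ M2)^op. -/
universe u

variable {Symb Val : Type u}

/-- Any well-formed modular system has disjoint input and output vocabularies. -/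
lemma MS.disj {σ ε : Set Symb} (M : MS Symb Val σ ε) : Disjoint σ ε := by
  induction M with
  | prim σ ε hd S hS => exact hd
  | proj ν hν M ih =>
      exact Set.disjoint_left.mpr fun x hx hx' =>
        (Set.disjoint_left.mp ih hx.1) hx'.1
  | comp hc hi M1 M2 ih1 ih2 =>
      rw [Set.disjoint_left]
      rintro x (hx | hx) (he | he)
      · exact Set.disjoint_left.mp ih1 hx he
      · exact Set.disjoint_left.mp hi hx he
      · exact hx.2 he
      · exact Set.disjoint_left.mp ih2 hx.1 he
  | union h12 h21 M1 M2 ih1 ih2 =>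
      rw [Set.disjoint_left]
      rintro x (hx | hx) (he | he)
      · exact Set.disjoint_left.mp ih1 hx he
      · exact Set.disjoint_left.mp h12 hx he
      · exact Set.disjoint_left.mp h21 hx he
      · exact Set.disjoint_left.mp ih2 hx he
  | feedback R S hR hS M ih =>
      rw [Set.disjoint_left]
      rintro x hx (he | he)
      · exact Set.disjoint_left.mp ih hx.1 he
      · exact hx.2 he

/-- Inertia: a derivable transition leaves the interpretation of every symbol
outside the output vocabulary unchanged. -/
lemma MS.inertia {σ ε : Set Symb} (M : MS Symb Val σ ε) :
    ∀ {B1 B2 : Symb → Val}, M.trans B1 B2 → Set.EqOn B2 B1 εᶜ := by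
  induction M with
  | prim σ ε hd S hS => exact fun h => h.2
  | proj ν hν M ih =>
      intro B1 B2 h x hx
      obtain ⟨B1', B2', h1, h2, ht, he⟩ := h
      exact he hx
  | comp hc hi M1 M2 ih1 ih2 =>
      intro B1 B2 h x hx
      obtain ⟨B', ht1, ht2⟩ := h
      have hx1 : x ∈ (_ : Set Symb)ᶜ := fun h' => hx (Or.inl h')
      have hx2 : x ∈ (_ : Set Symb)ᶜ := fun h' => hx (Or.inr h')
      rw [ih2 ht2 hx2, ih1 ht1 hx1]
  | union h12 h21 M1 M2 ih1 ih2 =>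
      intro B1 B2 h x hx
      rcases h with h | h
      · exact ih1 h fun h' => hx (Or.inl h')
      · exact ih2 h fun h' => hx (Or.inr h')
  | feedback R S hR hS M ih =>
      intro B1 B2 h x hx
      exact ih h.1 fun h' => hx (Or.inl h')

/-- Adaptation: a derivable transition can be re-run from any state agreeing with
the original initial state on `σ ∪ ε`; pointwise, the resulting state either agrees
with the original resulting state, or that symbol was inert in both runs. -/
lemma MS.adapt {σ ε : Set Symb} (M : MS Symb Val σ ε) :
    ∀ {B1 B2 D1 : Symb → Val}, M.trans B1 B2 → Set.EqOn D1 B1 (σ ∪ ε) →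
      ∃ D2, M.trans D1 D2 ∧ ∀ x, D2 x = B2 x ∨ (D2 x = D1 x ∧ B2 x = B1 x) := by
  classical
  induction M with
  | prim σ ε hd S hS =>
      intro B1 B2 D1 h hD
      obtain ⟨⟨B', hB'S, hB'⟩, hin⟩ := h
      refine ⟨fun x => if x ∈ ε then B2 x else D1 x, ⟨⟨B', hB'S, ?_⟩, ?_⟩, ?_⟩
      · intro x hx
        by_cases hxε : x ∈ ε
        · simp only [hxε, if_true]; exact hB' hx
        · have hxσ : x ∈ σ := hx.resolve_right hxε
          simp only [hxε, if_false]
          rw [hD (Or.inl hxσ), ← hin hxε, hB' hx]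
      · intro x hx
        simp only [Set.mem_compl_iff] at hx
        simp only [hx, if_false]
      · intro x
        by_cases hxε : x ∈ ε
        · exact Or.inl (by simp [hxε])
        · exact Or.inr ⟨by simp [hxε], hin hxε⟩
  | @proj σ ε ν hν M ih =>
      intro B1 B2 D1 h hD
      obtain ⟨B1', B2', h1, h2, ht, he⟩ := h
      set D1' : Symb → Val := fun x => if x ∈ ν then D1 x else B1' x with hD1'
      have hD1'B1' : Set.EqOn D1' B1' (σ ∪ ε) := by
        intro x hx
        by_cases hxν : x ∈ ν
        · have hx' : x ∈ σ ∩ ν ∪ ε ∩ ν := by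
            rcases hx with hx | hx
            · exact Or.inl ⟨hx, hxν⟩
            · exact Or.inr ⟨hx, hxν⟩
          simp only [hD1', hxν, if_true]
          rw [hD hx', h1 hxν]
        · simp only [hD1', hxν, if_false]
      obtain ⟨D2', ht', hp⟩ := ih ht hD1'B1'
      have hin' : Set.EqOn D2' D1' εᶜ := M.inertia ht'
      refine ⟨fun x => if x ∈ ε ∩ ν then D2' x else D1 x,
        ⟨D1', D2', ?_, ?_, ht', ?_⟩, ?_⟩
      · intro x hx; simp only [hD1', hx, if_true]
      · intro x hx
        by_cases hxε : x ∈ ε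
        · simp only [Set.mem_inter_iff, hxε, hx, and_self, if_true]
        · have : x ∉ (ε ∩ ν) := fun h' => hxε h'.1
          simp only [this, if_false]
          rw [hin' hxε]; simp only [hD1', hx, if_true]
      · intro x hx
        simp only [Set.mem_compl_iff] at hx
        simp only [hx, if_false]
      · intro x
        by_cases hx : x ∈ ε ∩ ν
        · simp only [hx, if_true]
          rcases hp x with h' | ⟨h', h''⟩
          · exact Or.inl (by rw [h', h2 hx.2])
          · refine Or.inr ⟨?_, ?_⟩
            · rw [h']; simp only [hD1', hx.2, if_true]
            · rw [← h2 hx.2, h'', ← h1 hx.2]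
        · exact Or.inr ⟨by simp [hx], he hx⟩
  | @comp σ1 ε1 σ2 ε2 hc hi M1 M2 ih1 ih2 =>
      intro B1 B2 D1 h hD
      obtain ⟨B', ht1, ht2⟩ := h
      have hD1 : Set.EqOn D1 B1 (σ1 ∪ ε1) := by
        intro x hx
        rcases hx with hx | hx
        · exact hD (Or.inl (Or.inl hx))
        · exact hD (Or.inr (Or.inl hx))
      obtain ⟨D', ht1', hp1⟩ := ih1 ht1 hD1
      have hD' : Set.EqOn D' B' (σ2 ∪ ε2) := by
        intro x hx
        rcases hp1 x with h' | ⟨h', h''⟩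
        · exact h'
        · rw [h', h'']
          rcases hx with hx | hx
          · by_cases hxε1 : x ∈ ε1
            · exact hD (Or.inr (Or.inl hxε1))
            · exact hD (Or.inl (Or.inr ⟨hx, hxε1⟩))
          · exact hD (Or.inr (Or.inr hx))
      obtain ⟨D2, ht2', hp2⟩ := ih2 ht2 hD'
      refine ⟨D2, ⟨D', ht1', ht2'⟩, ?_⟩
      intro x
      rcases hp2 x with h' | ⟨h', h''⟩
      · exact Or.inl h'
      · rcases hp1 x with h3 | ⟨h3, h4⟩
        · exact Or.inl (by rw [h', h3, ← h''])
        · exact Or.inr ⟨by rw [h', h3], by rw [h'', h4]⟩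
  | @union σ1 ε1 σ2 ε2 h12 h21 M1 M2 ih1 ih2 =>
      intro B1 B2 D1 h hD
      rcases h with h | h
      · have : Set.EqOn D1 B1 (σ1 ∪ ε1) := by
          intro x hx
          rcases hx with hx | hx
          · exact hD (Or.inl (Or.inl hx))
          · exact hD (Or.inr (Or.inl hx))
        obtain ⟨D2, ht, hp⟩ := ih1 h this
        exact ⟨D2, Or.inl ht, hp⟩
      · have : Set.EqOn D1 B1 (σ2 ∪ ε2) := by
          intro x hx
          rcases hx with hx | hx
          · exact hD (Or.inl (Or.inr hx))
          · exact hD (Or.inr (Or.inr hx))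
        obtain ⟨D2, ht, hp⟩ := ih2 h this
        exact ⟨D2, Or.inr ht, hp⟩
  | @feedback σ ε R S hR hS M ih =>
      intro B1 B2 D1 h hD
      obtain ⟨ht, hRS⟩ := h
      have hD1 : Set.EqOn D1 B1 (σ ∪ ε) := by
        intro x hx
        rcases hx with hx | hx
        · by_cases hxR : x = R
          · exact hD (Or.inr (Or.inr (by simp [hxR])))
          · exact hD (Or.inl ⟨hx, hxR⟩)
        · exact hD (Or.inr (Or.inl hx))
      obtain ⟨D2, ht', hp⟩ := ih ht hD1
      refine ⟨D2, ⟨ht', ?_⟩, hp⟩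
      have hDR : D1 R = B1 R := hD1 (Or.inl hR)
      have hDS : D2 S = B2 S := by
        rcases hp S with h' | ⟨h', h''⟩
        · exact h'
        · rw [h', hD1 (Or.inr hS), h'']
      rw [hDR, hRS, hDS]

/-- Composition step of the equivalence of semantics: if
`M1 ∈ MS(σ1, ε1)` and `M2 ∈ MS(σ2, ε2)` are well-formed modular systems with
`ε1 ∩ ε2 = ∅` and `σ1 ∩ ε2 = ∅`, `M1^mt = M1^op` and `M2^mt = M2^op`, then the
sequential composition `M1 ▷ M2 ∈ MS(σ1 ∪ (σ2 ∖ ε1), ε1 ∪ ε2)` satisfies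
`(M1 ▷ M2)^mt = (M1 ▷ M2)^op`. -/
theorem mt_eq_op_comp {σ1 ε1 σ2 ε2 : Set Symb}
    (hcomposable : Disjoint ε1 ε2) (hindep : Disjoint σ1 ε2)
    (M1 : MS Symb Val σ1 ε1) (M2 : MS Symb Val σ2 ε2)
    (h1 : M1.mt = M1.op) (h2 : M2.mt = M2.op) :
    (MS.comp hcomposable hindep M1 M2).mt = (MS.comp hcomposable hindep M1 M2).op := by
  classical
  have d1 : Disjoint σ1 ε1 := M1.disj
  have d2 : Disjoint σ2 ε2 := M2.disj
  ext B
  simp only [MS.mt, MS.op, Set.mem_inter_iff, Set.mem_setOf_eq]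
  constructor
  · rintro ⟨hBm1, hBm2⟩
    rw [h1] at hBm1
    rw [h2] at hBm2
    obtain ⟨A1, A2, htA, hBA1, hBA2⟩ := hBm1
    obtain ⟨C1, C2, htC, hBC1, hBC2⟩ := hBm2
    set B1 : Symb → Val := fun x => if x ∈ ε1 then A1 x else if x ∈ ε2 then C1 x else B x
      with hB1def
    have hB1A1 : Set.EqOn B1 A1 (σ1 ∪ ε1) := by
      intro x hx
      rcases hx with hx | hx
      · have hx1 : x ∉ ε1 := Set.disjoint_left.mp d1 hx
        have hx2 : x ∉ ε2 := Set.disjoint_left.mp hindep hx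
        simp only [hB1def, hx1, hx2, if_false]
        exact hBA1 hx
      · simp only [hB1def, hx, if_true]
    obtain ⟨D', htD', hp1⟩ := M1.adapt htA hB1A1
    -- D' agrees with B on ε1
    have hD'B : ∀ x ∈ ε1, D' x = B x := by
      intro x hx
      rcases hp1 x with h' | ⟨h', h''⟩
      · rw [h', ← hBA2 hx]
      · rw [h']
        simp only [hB1def, hx, if_true]
        rw [← h'', ← hBA2 hx]
    -- D' agrees with B1 outside ε1
    have hD'B1 : Set.EqOn D' B1 ε1ᶜ := M1.inertia htD'
    have hD'C1 : Set.EqOn D' C1 (σ2 ∪ ε2) := by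
      intro x hx
      rcases hx with hx | hx
      · by_cases hxε1 : x ∈ ε1
        · rw [hD'B x hxε1, hBC1 hx]
        · have hx2 : x ∉ ε2 := Set.disjoint_left.mp d2 hx
          rw [hD'B1 hxε1]
          simp only [hB1def, hxε1, hx2, if_false]
          exact hBC1 hx
      · have hxε1 : x ∉ ε1 := Set.disjoint_left.mp (Disjoint.symm hcomposable) hx
        rw [hD'B1 hxε1]
        simp only [hB1def, hxε1, hx, if_false, if_true]
    obtain ⟨D2, htD2, hp2⟩ := M2.adapt htC hD'C1
    refine ⟨B1, D2, ⟨D', htD', htD2⟩, ?_, ?_⟩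
    · intro x hx
      rcases hx with hx | hx
      · have hx1 : x ∉ ε1 := Set.disjoint_left.mp d1 hx
        have hx2 : x ∉ ε2 := Set.disjoint_left.mp hindep hx
        simp only [hB1def, hx1, hx2, if_false]
      · have hx2 : x ∉ ε2 := Set.disjoint_left.mp d2 hx.1
        simp only [hB1def, hx.2, hx2, if_false]
    · intro x hx
      rcases hx with hx | hx
      · -- x ∈ ε1, hence x ∉ ε2
        have hx2 : x ∉ ε2 := Set.disjoint_left.mp hcomposable hx
        rw [M2.inertia htD2 hx2, hD'B x hx]
      · -- x ∈ ε2
        have hxε1 : x ∉ ε1 := Set.disjoint_left.mp (Disjoint.symm hcomposable) hx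
        rcases hp2 x with h' | ⟨h', h''⟩
        · rw [h', ← hBC2 hx]
        · rw [h', hD'B1 hxε1]
          simp only [hB1def, hxε1, hx, if_false, if_true]
          rw [← h'', ← hBC2 hx]
  · rintro ⟨B1, B2, ⟨B', ht1, ht2⟩, hBσ, hBε⟩
    constructor
    · rw [h1]
      refine ⟨B1, B', ht1, fun x hx => hBσ (Or.inl hx), ?_⟩
      intro x hx
      have hx2 : x ∉ ε2 := Set.disjoint_left.mp hcomposable hx
      rw [hBε (Or.inl hx), M2.inertia ht2 hx2]
    · rw [h2]
      refine ⟨B', B2, ht2, ?_, fun x hx => hBε (Or.inr hx)⟩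
      intro x hx
      by_cases hxε1 : x ∈ ε1
      · have hx2 : x ∉ ε2 := Set.disjoint_left.mp hcomposable hxε1
        rw [hBε (Or.inl hxε1), M2.inertia ht2 hx2]
      · rw [hBσ (Or.inr ⟨hx, hxε1⟩), M1.inertia ht1 hxε1]
end
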